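/- For n = 2 the quantum upper bound is attained: the maximum over unit vectors v₁, v₂ ∈ ℝ³ and encodings r : {0,1}² → ℝ³ with ‖r x‖ ≤ 1 of the average success probability (1/(2²·2)) · Σ_{x ∈ {0,1}²} Σ_{i < 2} (1 + (−1)^{x i} · ⟨v i, r x⟩)/2 equals 1/2 + 1/(2√2), and it is attained by the orthonormal vectors v₁ = (1,0,0), v₂ = (0,1,0) with r x = ((−1)^{x₁}, (−1)^{x₂}, 0)/√2. -/

import Mathlib

open scoped RealInnerProductSpace

/-!
Writing `s_x = ∑ᵢ (-1)^{xᵢ} vᵢ`, the average success probability is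
`1/2 + (∑ₓ ⟪s_x, r x⟫) / (2^{n+1} n)`, so by Cauchy–Schwarz the best encoding is `r x = s_x / ‖s_x‖`
and the value is governed by `∑ₓ ‖s_x‖`. For `n = 2` this sum is `2 (‖v₁ + v₂‖ + ‖v₁ - v₂‖)`, and
the parallelogram law bounds `‖v₁ + v₂‖ + ‖v₁ - v₂‖` by `2√2` for unit vectors, with equality
exactly when `v₁ ⟂ v₂`.
-/

/-- The average success probability, in the Bloch-vector formulation, of the pure
`n ↦ 1` quantum random access code with measurement vectors `v` and encoding `r`. -/
noncomputable def avgProb (n : ℕ) (v : Fin n → EuclideanSpace ℝ (Fin 3))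
    (r : (Fin n → Bool) → EuclideanSpace ℝ (Fin 3)) : ℝ :=
  (1 / ((2 : ℝ) ^ n * n)) *
    ∑ x : Fin n → Bool, ∑ i : Fin n,
      (1 + (if x i then (-1 : ℝ) else 1) * ⟪v i, r x⟫) / 2

theorem norm_add_add_norm_sub_le {E : Type*} [NormedAddCommGroup E] [InnerProductSpace ℝ E]
    (a b : E) : ‖a + b‖ + ‖a - b‖ ≤ 2 * √(‖a‖ ^ 2 + ‖b‖ ^ 2) := by
  have parallelogram := parallelogram_law_with_norm ℝ a b
  rw [show 2 * √(‖a‖ ^ 2 + ‖b‖ ^ 2) = √(2 * (‖a + b‖ ^ 2 + ‖a - b‖ ^ 2)) by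
    rw [parallelogram, ← mul_assoc, Real.sqrt_mul' _ (by positivity),
      show (2 * 2 : ℝ) = 2 ^ 2 by norm_num, Real.sqrt_sq zero_le_two]]
  apply Real.le_sqrt_of_sq_le
  nlinarith [sq_nonneg (‖a + b‖ - ‖a - b‖)]

theorem sum_fin_two_arrow_bool {M : Type*} [AddCommMonoid M] (f : (Fin 2 → Bool) → M) :
    ∑ x, f x = f ![false, false] + f ![false, true] + f ![true, false] + f ![true, true] := by
  rw [← (finTwoArrowEquiv Bool).symm.sum_comp f]
  simp only [finTwoArrowEquiv_symm_apply, Fintype.sum_prod_type, Fintype.sum_bool]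
  abel

def signedSum {E : Type*} [AddCommGroup E] [Module ℝ E] {n : ℕ} (v : Fin n → E)
    (x : Fin n → Bool) : E :=
  ∑ i, (if x i then (-1 : ℝ) else 1) • v i

theorem sum_norm_signedSum_fin_two {E : Type*} [NormedAddCommGroup E] [NormedSpace ℝ E]
    (v : Fin 2 → E) :
    ∑ x, ‖signedSum v x‖ = 2 * (‖v 0 + v 1‖ + ‖v 0 - v 1‖) := by
  simp only [sum_fin_two_arrow_bool, signedSum, Fin.sum_univ_two, Matrix.cons_val_zero,
    Matrix.cons_val_one, Matrix.cons_val_fin_one, Bool.false_eq_true, ↓reduceIte, one_smul, neg_smul]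
  rw [← neg_add, norm_neg, ← norm_neg (-v 0 + v 1), neg_add, neg_neg, ← sub_eq_add_neg]
  ring

theorem inner_signedSum {E : Type*} [NormedAddCommGroup E] [InnerProductSpace ℝ E] {n : ℕ}
    (v : Fin n → E) (x : Fin n → Bool) (y : E) :
    ⟪signedSum v x, y⟫ = ∑ i, (if x i then (-1 : ℝ) else 1) * ⟪v i, y⟫ := by
  simp only [signedSum, sum_inner, real_inner_smul_left]

theorem avgProb_eq {n : ℕ} (hn : n ≠ 0) (v : Fin n → EuclideanSpace ℝ (Fin 3))
    (r : (Fin n → Bool) → EuclideanSpace ℝ (Fin 3)) :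
    avgProb n v r = 1 / 2 + (∑ x, ⟪signedSum v x, r x⟫) / (2 ^ (n + 1) * n) := by
  simp only [avgProb, inner_signedSum, ← Finset.sum_div, Finset.sum_add_distrib, Finset.sum_const,
    Finset.card_univ, Fintype.card_fun, Fintype.card_bool, Fintype.card_fin]
  field_simp
  ring

theorem avgProb_le {n : ℕ} (hn : n ≠ 0) (v : Fin n → EuclideanSpace ℝ (Fin 3))
    (r : (Fin n → Bool) → EuclideanSpace ℝ (Fin 3)) (hr : ∀ x, ‖r x‖ ≤ 1) :
    avgProb n v r ≤ 1 / 2 + (∑ x, ‖signedSum v x‖) / (2 ^ (n + 1) * n) := by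
  rw [avgProb_eq hn]
  gcongr with x
  calc ⟪signedSum v x, r x⟫ ≤ ‖signedSum v x‖ * ‖r x‖ := real_inner_le_norm _ _
    _ ≤ ‖signedSum v x‖ := mul_le_of_le_one_right (norm_nonneg _) (hr x)

theorem avgProb_two_le (v : Fin 2 → EuclideanSpace ℝ (Fin 3))
    (r : (Fin 2 → Bool) → EuclideanSpace ℝ (Fin 3)) (hv : ∀ i, ‖v i‖ = 1) (hr : ∀ x, ‖r x‖ ≤ 1) :
    avgProb 2 v r ≤ 1 / 2 + 1 / (2 * √2) := by
  have hsum : ∑ x, ‖signedSum v x‖ ≤ 4 * √2 := by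
    have := norm_add_add_norm_sub_le (v 0) (v 1)
    rw [hv 0, hv 1, one_pow, one_add_one_eq_two] at this
    rw [sum_norm_signedSum_fin_two]
    linarith
  calc avgProb 2 v r ≤ 1 / 2 + (∑ x, ‖signedSum v x‖) / (2 ^ (2 + 1) * 2) :=
        avgProb_le two_ne_zero v r hr
    _ ≤ 1 / 2 + 4 * √2 / (2 ^ (2 + 1) * 2) := by gcongr
    _ = 1 / 2 + 1 / (2 * √2) := by
      field_simp
      linear_combination 4 * Real.mul_self_sqrt (zero_le_two (α := ℝ))

theorem avgProb_eq_of_forall_sign_mul_inner {n : ℕ} (hn : n ≠ 0)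
    (v : Fin n → EuclideanSpace ℝ (Fin 3))
    (r : (Fin n → Bool) → EuclideanSpace ℝ (Fin 3)) (c : ℝ)
    (h : ∀ x i, (if x i then (-1 : ℝ) else 1) * ⟪v i, r x⟫ = c) :
    avgProb n v r = (1 + c) / 2 := by
  simp only [avgProb, h, Finset.sum_const, Finset.card_univ, Fintype.card_fun, Fintype.card_bool,
    Fintype.card_fin, nsmul_eq_mul]
  field_simp
  push_cast
  ring

noncomputable def optimalEncoding (x : Fin 2 → Bool) : EuclideanSpace ℝ (Fin 3) :=
  (WithLp.equiv 2 (Fin 3 → ℝ)).symm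
    ![(if x 0 then (-1 : ℝ) else 1) / √2, (if x 1 then (-1 : ℝ) else 1) / √2, 0]

theorem norm_optimalEncoding (x : Fin 2 → Bool) : ‖optimalEncoding x‖ = 1 := by
  simp only [optimalEncoding, WithLp.equiv_symm_apply, EuclideanSpace.norm_eq, Real.norm_eq_abs,
    sq_abs, Fin.sum_univ_three, Matrix.cons_val_zero, Matrix.cons_val_one, Matrix.cons_val,
    ne_eq, OfNat.ofNat_ne_zero, not_false_eq_true, zero_pow, add_zero, Real.sqrt_eq_one]
  split_ifs <;> norm_num [div_pow]

theorem avgProb_optimalEncoding :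
    avgProb 2 ![EuclideanSpace.single 0 1, EuclideanSpace.single 1 1] optimalEncoding
      = 1 / 2 + 1 / (2 * √2) := by
  rw [avgProb_eq_of_forall_sign_mul_inner two_ne_zero _ _ (1 / √2)]
  · ring
  intro x i
  fin_cases i <;>
    simp only [Fin.zero_eta, Fin.mk_one, Fin.isValue, Matrix.cons_val_zero, Matrix.cons_val_one,
      Matrix.cons_val_fin_one, optimalEncoding, WithLp.equiv_symm_apply,
      EuclideanSpace.inner_single_left, Real.ringHom_apply, one_mul] <;>
    split_ifs <;> ring

/-- For `n = 2` the quantum upper bound `1/2 + 1/(2√2)` is the maximum of the average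
success probability, and it is attained by `v₁ = (1,0,0)`, `v₂ = (0,1,0)` and
`r x = ((−1)^{x₁}, (−1)^{x₂}, 0)/√2`. -/
theorem stmt13 :
    IsGreatest
      {p : ℝ | ∃ (v : Fin 2 → EuclideanSpace ℝ (Fin 3))
        (r : (Fin 2 → Bool) → EuclideanSpace ℝ (Fin 3)),
        (∀ i, ‖v i‖ = 1) ∧ (∀ x, ‖r x‖ ≤ 1) ∧ p = avgProb 2 v r}
      (1 / 2 + 1 / (2 * Real.sqrt 2)) ∧
    avgProb 2
      ![EuclideanSpace.single 0 1, EuclideanSpace.single 1 1]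
      (fun x => (WithLp.equiv 2 (Fin 3 → ℝ)).symm
        ![(if x 0 then (-1 : ℝ) else 1) / Real.sqrt 2,
          (if x 1 then (-1 : ℝ) else 1) / Real.sqrt 2, 0])
      = 1 / 2 + 1 / (2 * Real.sqrt 2) := by
  refine ⟨⟨⟨_, optimalEncoding, fun i => ?_, fun x => (norm_optimalEncoding x).le,
    avgProb_optimalEncoding.symm⟩, ?_⟩, avgProb_optimalEncoding⟩
  · fin_cases i <;> simp
  · rintro p ⟨v, r, hv, hr, rfl⟩
    exact avgProb_two_le v r hv hr
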